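/- Let 0 < w < 1 and 1/2 < θ < 1. If θ ≥ w and θ ≥ 2(1−w)/(2−w), then the premiss-based rule is optimal (L_w(r_pb) ≤ L_w(r) for every admissible rule r) for every odd committee size n = 2m+1, m ≥ 1. -/

import Mathlib

def tsum4 (T : ℕ × ℕ × ℕ × ℕ) : ℕ := T.1 + T.2.1 + T.2.2.1 + T.2.2.2

def tableStep (T S : ℕ × ℕ × ℕ × ℕ) : Prop :=
  (∃ x y z t : ℕ, T = (x, y, z, t + 1) ∧ S = (x, y, z + 1, t)) ∨
  (∃ x y z t : ℕ, T = (x, y, z, t + 1) ∧ S = (x, y + 1, z, t)) ∨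
  (∃ x y z t : ℕ, T = (x, y + 1, z, t) ∧ S = (x + 1, y, z, t)) ∨
  (∃ x y z t : ℕ, T = (x, y, z + 1, t) ∧ S = (x + 1, y, z, t))

def tableLe : ℕ × ℕ × ℕ × ℕ → ℕ × ℕ × ℕ × ℕ → Prop :=
  Relation.ReflTransGen tableStep

/-- A rule is admissible if it is invariant under transposition and order-preserving. -/
def Admissible (n : ℕ) (r : ℕ × ℕ × ℕ × ℕ → Fin 2) : Prop :=
  (∀ x y z t : ℕ, x + y + z + t = n → r (x, y, z, t) = r (x, z, y, t)) ∧
  (∀ T S : ℕ × ℕ × ℕ × ℕ, tsum4 T = n → tsum4 S = n → tableLe T S → r T ≤ r S)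

def tables (n : ℕ) : Finset (ℕ × ℕ × ℕ × ℕ) :=
  ((Finset.range (n+1)) ×ˢ (Finset.range (n+1)) ×ˢ (Finset.range (n+1)) ×ˢ
    (Finset.range (n+1))).filter (fun T => tsum4 T = n)

noncomputable def mcoef (n : ℕ) (T : ℕ × ℕ × ℕ × ℕ) : ℝ :=
  (n.factorial : ℝ) /
    (T.1.factorial * T.2.1.factorial * T.2.2.1.factorial * T.2.2.2.factorial)

/-- The loss `L_w(r) = w·ℙ_r(FP) + (1−w)·ℙ_r(FN)`. -/
noncomputable def loss (n : ℕ) (w θ : ℝ) (r : ℕ × ℕ × ℕ × ℕ → Fin 2) : ℝ :=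
  w * ∑ T ∈ (tables n).filter (fun T => r T = 1),
        mcoef n T * θ ^ (T.1 + 2*T.2.1 + T.2.2.2) * (1-θ) ^ (T.1 + 2*T.2.2.1 + T.2.2.2)
  + (1-w) * ∑ T ∈ (tables n).filter (fun T => r T = 0),
        mcoef n T * θ ^ (2*T.1 + T.2.1 + T.2.2.1) * (1-θ) ^ (T.2.1 + T.2.2.1 + 2*T.2.2.2)

/-- The premiss-based rule: decide `C` iff `x+y > z+t` and `x+z > y+t`. -/
def rulePB : ℕ × ℕ × ℕ × ℕ → Fin 2 := fun T =>
  if T.2.2.1 + T.2.2.2 < T.1 + T.2.1 ∧ T.2.1 + T.2.2.2 < T.1 + T.2.2.1 then 1 else 0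

/-! Write `loss r` as a constant plus the sum, over the tables accepted by `r`, of the cost of
accepting rather than rejecting. On a table accepted by `rulePB` we have `y + t < x + z`, and
`θ ≥ w` makes that cost nonpositive. On a table accepted by `r` but not by `rulePB`, oddness of
`n` gives `x + z < y + t` or `x + y < z + t`; the transposition `y ↔ z` preserves `r`, `rulePB`
and the false-negative weight, and `θ ≥ 2(1−w)/(2−w)` makes the costs of a table and of its
transpose add up to a nonnegative number. -/

open Finset

theorem sum_nonneg_of_involution {α M : Type*} [AddCommMonoid M] [LinearOrder M]
    [IsOrderedCancelAddMonoid M] {s : Finset α} {f : α → M} (σ : α → α)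
    (hσ : ∀ a ∈ s, σ a ∈ s) (hσσ : ∀ a ∈ s, σ (σ a) = a) (hf : ∀ a ∈ s, 0 ≤ f a + f (σ a)) :
    0 ≤ ∑ a ∈ s, f a := by
  have hperm : ∑ a ∈ s, f (σ a) = ∑ a ∈ s, f a :=
    sum_nbij' σ σ hσ hσ hσσ hσσ fun _ _ => rfl
  have hdouble := sum_nonneg hf
  rw [sum_add_distrib, hperm] at hdouble
  by_contra! hneg
  exact (add_neg hneg hneg).not_ge hdouble

theorem sum_filter_le_sum_filter_of_nonpos {α M : Type*} [AddCommMonoid M] [PartialOrder M]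
    [IsOrderedAddMonoid M] {s : Finset α} {f : α → M} {p q : α → Prop} [DecidablePred p]
    [DecidablePred q] (hp : ∀ a ∈ s, p a → f a ≤ 0)
    (hq : 0 ≤ ∑ a ∈ s.filter (fun a => ¬p a ∧ q a), f a) :
    ∑ a ∈ s.filter p, f a ≤ ∑ a ∈ s.filter q, f a := by
  have hsplit_p : ∑ a ∈ s.filter p, f a =
      ∑ a ∈ s.filter (fun a => p a ∧ q a), f a + ∑ a ∈ s.filter (fun a => p a ∧ ¬q a), f a := by
    rw [← sum_filter_add_sum_filter_not (s.filter p) q, filter_filter, filter_filter]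
  have hsplit_q : ∑ a ∈ s.filter q, f a =
      ∑ a ∈ s.filter (fun a => p a ∧ q a), f a + ∑ a ∈ s.filter (fun a => ¬p a ∧ q a), f a := by
    rw [← sum_filter_add_sum_filter_not (s.filter q) p, filter_filter, filter_filter]
    simp only [and_comm]
  have hrest : ∑ a ∈ s.filter (fun a => p a ∧ ¬q a), f a ≤ 0 :=
    sum_nonpos fun a ha => by
      rw [mem_filter] at ha
      exact hp a ha.1 ha.2.1
  rw [hsplit_p, hsplit_q]
  exact add_le_add_right (hrest.trans hq) _

theorem mul_pow_mul_pow_le {R : Type*} [CommRing R] [LinearOrder R] [IsStrictOrderedRing R]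
    {p q α β : R} {i j : ℕ} (hq : 0 ≤ q) (hqp : q ≤ p) (hα : 0 ≤ α) (h : α * q ≤ β * p)
    (hij : i < j) : α * (p ^ i * q ^ j) ≤ β * (p ^ j * q ^ i) := by
  obtain ⟨k, rfl⟩ := Nat.exists_eq_add_of_lt hij
  have hp : 0 ≤ p := hq.trans hqp
  have hpq : 0 ≤ p ^ i * q ^ i := by positivity
  calc α * (p ^ i * q ^ (i + k + 1)) = p ^ i * q ^ i * (q ^ k * (α * q)) := by ring
    _ ≤ p ^ i * q ^ i * (p ^ k * (α * q)) := by gcongr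
    _ ≤ p ^ i * q ^ i * (p ^ k * (β * p)) := by gcongr
    _ = β * (p ^ (i + k + 1) * q ^ i) := by ring

def swapMid (T : ℕ × ℕ × ℕ × ℕ) : ℕ × ℕ × ℕ × ℕ := (T.1, T.2.2.1, T.2.1, T.2.2.2)

theorem swapMid_swapMid (T : ℕ × ℕ × ℕ × ℕ) : swapMid (swapMid T) = T := rfl

theorem mem_tables {n : ℕ} {T : ℕ × ℕ × ℕ × ℕ} : T ∈ tables n ↔ tsum4 T = n := by
  obtain ⟨x, y, z, t⟩ := T
  rw [tables, mem_filter]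
  simp only [mem_product, mem_range, tsum4, and_iff_right_iff_imp]
  omega

theorem swapMid_mem_tables {n : ℕ} {T : ℕ × ℕ × ℕ × ℕ} (hT : T ∈ tables n) :
    swapMid T ∈ tables n := by
  obtain ⟨x, y, z, t⟩ := T
  simp only [mem_tables, tsum4, swapMid] at *
  omega

theorem rulePB_eq_one_iff {T : ℕ × ℕ × ℕ × ℕ} :
    rulePB T = 1 ↔ T.2.2.1 + T.2.2.2 < T.1 + T.2.1 ∧ T.2.1 + T.2.2.2 < T.1 + T.2.2.1 := by
  unfold rulePB
  split_ifs with h <;> simp [h]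

theorem rulePB_swapMid (T : ℕ × ℕ × ℕ × ℕ) : rulePB (swapMid T) = rulePB T := by
  simp only [rulePB, swapMid]
  exact if_congr and_comm rfl rfl

theorem Admissible.apply_swapMid {n : ℕ} {r : ℕ × ℕ × ℕ × ℕ → Fin 2} (hr : Admissible n r)
    {T : ℕ × ℕ × ℕ × ℕ} (hT : T ∈ tables n) : r (swapMid T) = r T :=
  (hr.1 T.1 T.2.1 T.2.2.1 T.2.2.2 (mem_tables.1 hT)).symm

theorem mcoef_nonneg (n : ℕ) (T : ℕ × ℕ × ℕ × ℕ) : 0 ≤ mcoef n T := by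
  unfold mcoef; positivity

theorem mcoef_swapMid (n : ℕ) (T : ℕ × ℕ × ℕ × ℕ) : mcoef n (swapMid T) = mcoef n T := by
  simp only [mcoef, swapMid]; ring

noncomputable def fpWeight (θ : ℝ) (T : ℕ × ℕ × ℕ × ℕ) : ℝ :=
  θ ^ (T.1 + 2 * T.2.1 + T.2.2.2) * (1 - θ) ^ (T.1 + 2 * T.2.2.1 + T.2.2.2)

noncomputable def fnWeight (θ : ℝ) (T : ℕ × ℕ × ℕ × ℕ) : ℝ :=
  θ ^ (2 * T.1 + T.2.1 + T.2.2.1) * (1 - θ) ^ (T.2.1 + T.2.2.1 + 2 * T.2.2.2)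

section Weights

variable {θ α β : ℝ} (x y z t : ℕ)

theorem fpWeight_eq : fpWeight θ (x, y, z, t) =
    θ ^ (x + y) * (1 - θ) ^ (z + t) * (θ ^ (y + t) * (1 - θ) ^ (x + z)) := by
  simp only [fpWeight]; ring

theorem fnWeight_eq : fnWeight θ (x, y, z, t) =
    θ ^ (x + y) * (1 - θ) ^ (z + t) * (θ ^ (x + z) * (1 - θ) ^ (y + t)) := by
  simp only [fnWeight]; ring

theorem fnWeight_swapMid (T : ℕ × ℕ × ℕ × ℕ) : fnWeight θ (swapMid T) = fnWeight θ T := by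
  simp only [fnWeight, swapMid, add_right_comm _ T.2.2.1 T.2.1, add_comm T.2.2.1 T.2.1]

theorem pow_mul_one_sub_pow_nonneg (hθ0 : 0 ≤ θ) (hθ1 : θ ≤ 1) (i j : ℕ) :
    0 ≤ θ ^ i * (1 - θ) ^ j :=
  mul_nonneg (pow_nonneg hθ0 i) (pow_nonneg (sub_nonneg.2 hθ1) j)

theorem fpWeight_nonneg (hθ0 : 0 ≤ θ) (hθ1 : θ ≤ 1) (T : ℕ × ℕ × ℕ × ℕ) : 0 ≤ fpWeight θ T :=
  pow_mul_one_sub_pow_nonneg hθ0 hθ1 _ _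

variable {x y z t}

theorem mul_fpWeight_le_mul_fnWeight (hθ : 1 / 2 ≤ θ) (hθ1 : θ ≤ 1) (hα : 0 ≤ α)
    (h : α * (1 - θ) ≤ β * θ) (hlt : y + t < x + z) :
    α * fpWeight θ (x, y, z, t) ≤ β * fnWeight θ (x, y, z, t) := by
  rw [fpWeight_eq, fnWeight_eq, mul_left_comm, mul_left_comm β]
  exact mul_le_mul_of_nonneg_left (mul_pow_mul_pow_le (by linarith) (by linarith) hα h hlt)
    (pow_mul_one_sub_pow_nonneg (by linarith) hθ1 _ _)

theorem mul_fnWeight_le_mul_fpWeight (hθ : 1 / 2 ≤ θ) (hθ1 : θ ≤ 1) (hα : 0 ≤ α)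
    (h : α * (1 - θ) ≤ β * θ) (hlt : x + z < y + t) :
    α * fnWeight θ (x, y, z, t) ≤ β * fpWeight θ (x, y, z, t) := by
  rw [fpWeight_eq, fnWeight_eq, mul_left_comm, mul_left_comm β]
  exact mul_le_mul_of_nonneg_left (mul_pow_mul_pow_le (by linarith) (by linarith) hα h hlt)
    (pow_mul_one_sub_pow_nonneg (by linarith) hθ1 _ _)

end Weights

noncomputable def acceptCost (n : ℕ) (w θ : ℝ) (T : ℕ × ℕ × ℕ × ℕ) : ℝ :=
  mcoef n T * (w * fpWeight θ T - (1 - w) * fnWeight θ T)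

theorem loss_eq_add_sum_acceptCost (n : ℕ) (w θ : ℝ) (r : ℕ × ℕ × ℕ × ℕ → Fin 2) :
    loss n w θ r = (1 - w) * ∑ T ∈ tables n, mcoef n T * fnWeight θ T +
      ∑ T ∈ (tables n).filter (fun T => r T = 1), acceptCost n w θ T := by
  have hreject : (tables n).filter (fun T => r T = 0) = (tables n).filter (fun T => ¬r T = 1) :=
    filter_congr fun T _ => by omega
  have hcost : ∑ T ∈ (tables n).filter (fun T => r T = 1), acceptCost n w θ T =
      w * ∑ T ∈ (tables n).filter (fun T => r T = 1), mcoef n T * fpWeight θ T -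
        (1 - w) * ∑ T ∈ (tables n).filter (fun T => r T = 1), mcoef n T * fnWeight θ T := by
    simp only [acceptCost, mul_sum, ← sum_sub_distrib]
    exact sum_congr rfl fun _ _ => by ring
  rw [loss, hreject, hcost, ← sum_filter_add_sum_filter_not (tables n) (fun T => r T = 1)
    (fun T => mcoef n T * fnWeight θ T)]
  simp only [fpWeight, fnWeight, mul_assoc]
  ring

section Cost

variable {n : ℕ} {w θ : ℝ}

theorem acceptCost_nonpos (hθ : 1 / 2 ≤ θ) (hθ1 : θ ≤ 1) (hw0 : 0 ≤ w) (hwθ : w ≤ θ)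
    {T : ℕ × ℕ × ℕ × ℕ} (hT : rulePB T = 1) : acceptCost n w θ T ≤ 0 := by
  obtain ⟨x, y, z, t⟩ := T
  have hle := mul_fpWeight_le_mul_fnWeight (β := 1 - w) hθ hθ1 hw0 (by linarith)
    (rulePB_eq_one_iff.1 hT).2
  exact mul_nonpos_of_nonneg_of_nonpos (mcoef_nonneg n _) (sub_nonpos.2 hle)

theorem acceptCost_add_acceptCost_swapMid_nonneg (hθ : 1 / 2 ≤ θ) (hθ1 : θ ≤ 1) (hw0 : 0 ≤ w)
    (hw1 : w ≤ 1) (hw : 2 * (1 - w) * (1 - θ) ≤ w * θ) {T : ℕ × ℕ × ℕ × ℕ} (hodd : Odd (tsum4 T))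
    (hT : rulePB T ≠ 1) : 0 ≤ acceptCost n w θ T + acceptCost n w θ (swapMid T) := by
  have hpair : acceptCost n w θ T + acceptCost n w θ (swapMid T) = mcoef n T *
      (w * fpWeight θ T + w * fpWeight θ (swapMid T) - 2 * (1 - w) * fnWeight θ T) := by
    simp only [acceptCost, mcoef_swapMid, fnWeight_swapMid]; ring
  have hfp := fpWeight_nonneg (by linarith) hθ1 T
  have hfp' := fpWeight_nonneg (by linarith) hθ1 (swapMid T)
  rw [hpair]
  refine mul_nonneg (mcoef_nonneg n T) ?_
  obtain ⟨x, y, z, t⟩ := T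
  have h2w : 0 ≤ 2 * (1 - w) := by linarith
  rw [Ne, rulePB_eq_one_iff] at hT
  rw [show swapMid (x, y, z, t) = (x, z, y, t) from rfl] at hfp' ⊢
  have hfp_mul := mul_nonneg hw0 hfp
  have hfp_mul' := mul_nonneg hw0 hfp'
  obtain hlt | hlt : x + z < y + t ∨ x + y < z + t := by
    simp only [tsum4, Nat.odd_iff] at hodd hT
    omega
  · have := mul_fnWeight_le_mul_fpWeight hθ hθ1 h2w hw hlt
    linarith
  · have := mul_fnWeight_le_mul_fpWeight hθ hθ1 h2w hw hlt
    rw [show fnWeight θ (x, z, y, t) = _ from fnWeight_swapMid (x, y, z, t)] at this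
    linarith

end Cost

/-- If `θ ≥ w` and `θ ≥ 2(1−w)/(2−w)`, then the premiss-based rule is optimal for
every odd committee size `n = 2m+1`, `m ≥ 1`. -/
theorem premissBased_optimal_sufficient
    (w : ℝ) (hw0 : 0 < w) (hw1 : w < 1)
    (θ : ℝ) (hθ : 1/2 < θ) (hθ1 : θ < 1)
    (h1 : w ≤ θ) (h2 : 2 * (1 - w) / (2 - w) ≤ θ) :
    ∀ n m : ℕ, 1 ≤ m → n = 2 * m + 1 →
      ∀ r : ℕ × ℕ × ℕ × ℕ → Fin 2, Admissible n r →
        loss n w θ rulePB ≤ loss n w θ r := by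
  intro n m _ hn r hr
  have hw : 2 * (1 - w) * (1 - θ) ≤ w * θ := by
    rw [div_le_iff₀ (by linarith)] at h2
    linarith
  have hodd : ∀ T ∈ tables n, Odd (tsum4 T) := fun T hT => by
    rw [mem_tables.1 hT, hn]
    exact odd_two_mul_add_one m
  rw [loss_eq_add_sum_acceptCost, loss_eq_add_sum_acceptCost]
  refine add_le_add_right (sum_filter_le_sum_filter_of_nonpos
    (fun T _ hT => acceptCost_nonpos hθ.le hθ1.le hw0.le h1 hT) ?_) _
  refine sum_nonneg_of_involution swapMid (fun T hT => ?_) (fun T _ => swapMid_swapMid T)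
    (fun T hT => ?_) <;> rw [mem_filter] at hT
  · obtain ⟨hT, hpb, hrT⟩ := hT
    exact mem_filter.2
      ⟨swapMid_mem_tables hT, rulePB_swapMid T ▸ hpb, (hr.apply_swapMid hT).symm ▸ hrT⟩
  · exact acceptCost_add_acceptCost_swapMid_nonneg hθ.le hθ1.le hw0.le hw1.le hw
      (hodd T hT.1) hT.2.1
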